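/- Let (𝒞, ℛ) be a chemical reaction network on N species whose reaction diagram consists of a single linkage class (i.e., is connected). Then there does not exist a sequence of points x_n ∈ ℝ^N_{>0}, all lying in the same stoichiometric compatibility class (i.e., x_n − x_m ∈ span{y' − y : y → y' ∈ ℛ} for all n, m), for which lim_{n→∞} x_{n,i} ∈ {0, ∞} for at least one i and such that (i) 𝒞 is partitioned along (x_n) with tiers T_1, …, T_P and constant C, and (ii) T_1 consists of a union of linkage classes. -/

import Mathlib

open Filter

/-- For `u ∈ ℝ^N_{>0}` and `v ∈ ℝ^N`, `u^v := ∏ i, u_i ^ v_i` (real exponents). -/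
noncomputable def vpow {N : ℕ} (u v : Fin N → ℝ) : ℝ := ∏ i, u i ^ v i

/-- `T : Fin P → Finset (Fin N → ℝ)` is a partition of `C` into (nonempty) tiers. -/
def IsTierPartition {N : ℕ} (C : Finset (Fin N → ℝ)) {P : ℕ}
    (T : Fin P → Finset (Fin N → ℝ)) : Prop :=
  (∀ i, (T i).Nonempty) ∧
  (∀ i j, i ≠ j → ∀ y, y ∈ T i → y ∉ T j) ∧
  (∀ y, y ∈ C ↔ ∃ i, y ∈ T i)

/-- `C` is partitioned along the sequence `x` with respect to `f`, with tiers `T` and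
constant `c > 1`:  within a tier the values of `f` are comparable up to the factor `c`
uniformly in `n`, and values in a higher tier (smaller index) dominate those in lower
tiers in the limit. -/
def PartitionedAlongWith {N : ℕ} (C : Finset (Fin N → ℝ)) (x : ℕ → Fin N → ℝ)
    (f : (Fin N → ℝ) → (Fin N → ℝ) → ℝ) {P : ℕ}
    (T : Fin P → Finset (Fin N → ℝ)) (c : ℝ) : Prop :=
  IsTierPartition C T ∧ 1 < c ∧
  (∀ i, ∀ y ∈ T i, ∀ z ∈ T i, ∀ n,
      (1 / c) * f (x n) y ≤ f (x n) z ∧ f (x n) z ≤ c * f (x n) y) ∧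
  (∀ i j : Fin P, i < j → ∀ y ∈ T i, ∀ z ∈ T j,
      Tendsto (fun n => f (x n) y / f (x n) z) atTop atTop)

/-- `C` is partitioned along `x` (with respect to `f(x, y) = x^y`). -/
noncomputable def PartitionedAlong {N : ℕ} (C : Finset (Fin N → ℝ)) (x : ℕ → Fin N → ℝ)
    {P : ℕ} (T : Fin P → Finset (Fin N → ℝ)) (c : ℝ) : Prop :=
  PartitionedAlongWith C x (fun u v => vpow u v) T c

/-- A chemical reaction network on `N` species: a finite set of complexes
(vectors in `ℤ^N_{≥0}`, modelled as real vectors with nonnegative-integer entries)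
and a finite set of reactions (ordered pairs of distinct complexes), such that
every complex takes part in at least one reaction. -/
structure ReactionNetwork (N : ℕ) where
  complexes : Finset (Fin N → ℝ)
  reactions : Finset ((Fin N → ℝ) × (Fin N → ℝ))
  complexes_nonneg_int : ∀ y ∈ complexes, ∀ i, ∃ m : ℕ, y i = (m : ℝ)
  source_mem : ∀ r ∈ reactions, r.1 ∈ complexes
  target_mem : ∀ r ∈ reactions, r.2 ∈ complexes
  ne_of_mem : ∀ r ∈ reactions, r.1 ≠ r.2
  complex_in_reaction : ∀ y ∈ complexes, ∃ r ∈ reactions, r.1 = y ∨ r.2 = y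

/-- Two complexes are connected in the underlying undirected reaction diagram. -/
def ReactionNetwork.UndirConn {N : ℕ} (rn : ReactionNetwork N) :
    (Fin N → ℝ) → (Fin N → ℝ) → Prop :=
  Relation.ReflTransGen (fun a b => (a, b) ∈ rn.reactions ∨ (b, a) ∈ rn.reactions)

/-- There is a directed path (along reactions) from one complex to another. -/
def ReactionNetwork.DirReach {N : ℕ} (rn : ReactionNetwork N) :
    (Fin N → ℝ) → (Fin N → ℝ) → Prop :=
  Relation.ReflTransGen (fun a b => (a, b) ∈ rn.reactions)

/-- The network is weakly reversible: each linkage class (connected component of the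
underlying undirected reaction diagram) is strongly connected. -/
def ReactionNetwork.WeaklyReversible {N : ℕ} (rn : ReactionNetwork N) : Prop :=
  ∀ y ∈ rn.complexes, ∀ z ∈ rn.complexes, rn.UndirConn y z → rn.DirReach y z

/-- The reaction diagram consists of a single linkage class, i.e. it is connected. -/
def ReactionNetwork.SingleLinkageClass {N : ℕ} (rn : ReactionNetwork N) : Prop :=
  ∀ y ∈ rn.complexes, ∀ z ∈ rn.complexes, rn.UndirConn y z

/-- `T ⊆ 𝒞` consists of a (nonempty) union of linkage classes. -/
def ReactionNetwork.IsUnionOfLinkageClasses {N : ℕ} (rn : ReactionNetwork N)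
    (T : Finset (Fin N → ℝ)) : Prop :=
  T.Nonempty ∧ (∀ y ∈ T, y ∈ rn.complexes) ∧
  ∀ y ∈ T, ∀ z ∈ rn.complexes, rn.UndirConn y z → z ∈ T

/-- The stoichiometric subspace `S = span{y' − y : y → y' ∈ ℛ}`. -/
def ReactionNetwork.stoichSubspace {N : ℕ} (rn : ReactionNetwork N) :
    Submodule ℝ (Fin N → ℝ) :=
  Submodule.span ℝ {v : Fin N → ℝ | ∃ r ∈ rn.reactions, v = r.2 - r.1}

/-- Bounded mass-action kinetics: each rate function `κ_k` satisfies
`η < κ_k(t) < 1/η` for all `t ≥ 0`. -/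
def ReactionNetwork.BoundedKinetics {N : ℕ} (rn : ReactionNetwork N)
    (κ : ((Fin N → ℝ) × (Fin N → ℝ)) → ℝ → ℝ) (η : ℝ) : Prop :=
  0 < η ∧ ∀ r ∈ rn.reactions, ∀ t : ℝ, 0 ≤ t → η < κ r t ∧ κ r t < 1 / η

/-! If the top tier contains every complex, then for every reaction `y → y'` the ratio
`x_n^{y'} / x_n^y` stays in `[1/C, C]`, i.e. `⟨y' - y, log x_n⟩` is bounded in `n`. By linearity
and the uniform boundedness principle on the finite-dimensional space `S` this upgrades to
`|⟨v, log x_n⟩| ≤ K ‖v‖` for all `v ∈ S`. Taking `v = x_n - x_0 ∈ S` gives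
`∑ i, ((x_{n,i} - x_{0,i}) log x_{n,i} - K x_{n,i}) ≤ K ∑ i, x_{0,i}`. For `a > 0` the function
`t ↦ (t - a) log t - K t` is bounded below on `(0, ∞)` and tends to `+∞` both as `t → 0⁺` and as
`t → ∞`, so no coordinate of `x_n` can tend to `0` or to `∞`. -/

open Topology

noncomputable def logPairing {N : ℕ} (u : Fin N → ℝ) : (Fin N → ℝ) →ₗ[ℝ] ℝ :=
  Fintype.linearCombination ℝ fun i => Real.log (u i)

lemma logPairing_apply {N : ℕ} (u v : Fin N → ℝ) :
    logPairing u v = ∑ i, v i * Real.log (u i) := by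
  simp [logPairing, Fintype.linearCombination_apply]

lemma vpow_pos {N : ℕ} {u : Fin N → ℝ} (hu : ∀ i, 0 < u i) (v : Fin N → ℝ) : 0 < vpow u v :=
  Finset.prod_pos fun i _ => Real.rpow_pos_of_pos (hu i) _

lemma log_vpow {N : ℕ} {u : Fin N → ℝ} (hu : ∀ i, 0 < u i) (v : Fin N → ℝ) :
    Real.log (vpow u v) = logPairing u v := by
  rw [vpow, Real.log_prod fun i _ => (Real.rpow_pos_of_pos (hu i) _).ne', logPairing_apply]
  exact Finset.sum_congr rfl fun i _ => Real.log_rpow (hu i) _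

lemma PartitionedAlong.abs_logPairing_sub_le {N P : ℕ} {C : Finset (Fin N → ℝ)}
    {x : ℕ → Fin N → ℝ} {T : Fin P → Finset (Fin N → ℝ)} {c : ℝ}
    (h : PartitionedAlong C x T c) (hx : ∀ n i, 0 < x n i) {i : Fin P} {y z : Fin N → ℝ}
    (hy : y ∈ T i) (hz : z ∈ T i) (n : ℕ) : |logPairing (x n) (z - y)| ≤ Real.log c := by
  obtain ⟨-, hc, hwithin, -⟩ := h
  have hc0 : 0 < c := one_pos.trans hc
  have log_le {p q : ℝ} (hp : 0 < p) (hq : 0 < q) (h : p ≤ c * q) :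
      Real.log p ≤ Real.log c + Real.log q :=
    (Real.log_le_log hp h).trans_eq (Real.log_mul hc0.ne' hq.ne')
  obtain ⟨hlo, hhi⟩ := hwithin i y hy z hz n
  have hyz : vpow (x n) y ≤ c * vpow (x n) z := by
    rw [one_div] at hlo
    rwa [← inv_mul_le_iff₀ hc0]
  have := log_le (vpow_pos (hx n) y) (vpow_pos (hx n) z) hyz
  have := log_le (vpow_pos (hx n) z) (vpow_pos (hx n) y) hhi
  rw [map_sub, ← log_vpow (hx n), ← log_vpow (hx n), abs_le]
  constructor <;> linarith

lemma exists_bound_of_mem_span {ι 𝕜 V W : Type*} [NormedField 𝕜] [AddCommGroup V]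
    [Module 𝕜 V] [SeminormedAddCommGroup W] [NormedSpace 𝕜 W] (f : ι → V →ₗ[𝕜] W) {G : Set V}
    (hG : ∀ g ∈ G, ∃ M, ∀ i, ‖f i g‖ ≤ M) {v : V} (hv : v ∈ Submodule.span 𝕜 G) :
    ∃ M, ∀ i, ‖f i v‖ ≤ M := by
  induction hv using Submodule.span_induction with
  | mem g hg => exact hG g hg
  | zero => exact ⟨0, fun i => by simp⟩
  | add u w _ _ hu hw =>
    obtain ⟨Mu, hMu⟩ := hu
    obtain ⟨Mw, hMw⟩ := hw
    exact ⟨Mu + Mw, fun i =>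
      (map_add (f i) u w ▸ norm_add_le _ _).trans (add_le_add (hMu i) (hMw i))⟩
  | smul a u _ hu =>
    obtain ⟨M, hM⟩ := hu
    exact ⟨‖a‖ * M, fun i => by
      rw [map_smul, norm_smul]; exact mul_le_mul_of_nonneg_left (hM i) (norm_nonneg a)⟩

lemma Submodule.exists_uniform_bound_of_forall_bounded {ι 𝕜 E F : Type*}
    [NontriviallyNormedField 𝕜] [CompleteSpace 𝕜] [NormedAddCommGroup E] [NormedSpace 𝕜 E]
    [NormedAddCommGroup F] [NormedSpace 𝕜 F] (S : Submodule 𝕜 E) [FiniteDimensional 𝕜 S] (f : ι → E →ₗ[𝕜] F)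
    (hf : ∀ v ∈ S, ∃ M, ∀ i, ‖f i v‖ ≤ M) :
    ∃ K, 0 ≤ K ∧ ∀ i, ∀ v ∈ S, ‖f i v‖ ≤ K * ‖v‖ := by
  have := S.complete_of_finiteDimensional.completeSpace_coe
  let g : ι → S →L[𝕜] F := fun i => LinearMap.toContinuousLinearMap (f i ∘ₗ S.subtype)
  obtain ⟨C, hC⟩ := banach_steinhaus (g := g) fun v => hf v v.2
  refine ⟨max C 0, le_max_right _ _, fun i v hv => ?_⟩
  calc ‖f i v‖ = ‖g i ⟨v, hv⟩‖ := rfl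
    _ ≤ ‖g i‖ * ‖v‖ := (g i).le_opNorm ⟨v, hv⟩
    _ ≤ max C 0 * ‖v‖ := by gcongr; exact (hC i).trans (le_max_left _ _)

lemma neg_exp_le_mul_log_sub_mul {t : ℝ} (ht : 0 < t) (c : ℝ) :
    -Real.exp (c - 1) ≤ t * Real.log t - c * t := by
  have h := Real.add_one_le_exp (c - 1 - Real.log t)
  have he : t * Real.exp (c - 1 - Real.log t) = Real.exp (c - 1) := by
    rw [Real.exp_sub, Real.exp_log ht]; field_simp
  nlinarith [mul_le_mul_of_nonneg_left h ht.le]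

lemma add_sub_exp_le_sub_mul_log_sub_mul {a t : ℝ} (ha : 0 ≤ a) (ht : 0 < t) (K : ℝ) :
    a - Real.exp (K + a) + t ≤ (t - a) * Real.log t - K * t := by
  have h1 := neg_exp_le_mul_log_sub_mul ht (K + a + 1)
  have h2 := mul_le_mul_of_nonneg_left (Real.log_le_sub_one_of_pos ht) ha
  rw [add_sub_cancel_right] at h1
  nlinarith

lemma tendsto_sub_mul_log_sub_mul {a : ℝ} (ha : 0 < a) (K : ℝ) :
    Tendsto (fun t => (t - a) * Real.log t - K * t) (𝓝[>] 0 ⊔ atTop) atTop := by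
  refine Tendsto.sup ?_ ?_
  · have h0 : Tendsto (fun t : ℝ => t * Real.log t - K * t) (𝓝[>] 0) (𝓝 0) := by
      have : Continuous fun t : ℝ => t * Real.log t - K * t := by fun_prop
      simpa using (this.tendsto 0).mono_left nhdsWithin_le_nhds
    have hlog := Real.tendsto_log_nhdsGT_zero.const_mul_atBot_of_neg (neg_neg_of_pos ha)
    convert h0.add_atTop hlog using 2 with t
    ring
  · refine tendsto_atTop_mono' _ ?_
      (tendsto_atTop_add_const_left _ (a - Real.exp (K + a)) tendsto_id)
    filter_upwards [eventually_gt_atTop 0] with t ht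
    exact add_sub_exp_le_sub_mul_log_sub_mul ha.le ht K

lemma sum_sub_mul_log_sub_mul_le {N : ℕ} {x a : Fin N → ℝ} (hx : ∀ i, 0 < x i)
    (ha : ∀ i, 0 < a i) {K : ℝ} (hK : 0 ≤ K) (h : |logPairing x (x - a)| ≤ K * ‖x - a‖) :
    ∑ i, ((x i - a i) * Real.log (x i) - K * x i) ≤ K * ∑ i, a i := by
  have hnorm : ‖x - a‖ ≤ ∑ i, x i + ∑ i, a i := by
    have hsum_nonneg : 0 ≤ ∑ i, x i + ∑ i, a i :=
      add_nonneg (Finset.sum_nonneg fun i _ => (hx i).le) (Finset.sum_nonneg fun i _ => (ha i).le)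
    refine (pi_norm_le_iff_of_nonneg hsum_nonneg).2 fun i => ?_
    rw [Pi.sub_apply, Real.norm_eq_abs]
    calc |x i - a i| ≤ x i + a i := by
          rw [abs_le]; constructor <;> linarith [hx i, ha i]
      _ ≤ ∑ i, x i + ∑ i, a i :=
          add_le_add (Finset.single_le_sum (fun j _ => (hx j).le) (Finset.mem_univ i))
            (Finset.single_le_sum (fun j _ => (ha j).le) (Finset.mem_univ i))
  have hpair : logPairing x (x - a) = ∑ i, (x i - a i) * Real.log (x i) := by
    simp only [logPairing_apply, Pi.sub_apply]
  rw [Finset.sum_sub_distrib, ← Finset.mul_sum, ← hpair]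
  nlinarith [le_abs_self (logPairing x (x - a)), mul_le_mul_of_nonneg_left hnorm hK]

lemma not_tendsto_of_sum_sub_mul_log_sub_mul_le {N : ℕ} {a : Fin N → ℝ} (ha : ∀ i, 0 < a i)
    {K B : ℝ} {x : ℕ → Fin N → ℝ} (hx : ∀ n i, 0 < x n i)
    (hsum : ∀ n, ∑ i, ((x n i - a i) * Real.log (x n i) - K * x n i) ≤ B) (j : Fin N) :
    ¬ Tendsto (fun n => x n j) atTop (𝓝[>] 0 ⊔ atTop) := by
  intro hj
  set m : Fin N → ℝ := fun i => a i - Real.exp (K + a i)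
  have hbdd : ∀ n, (x n j - a j) * Real.log (x n j) - K * x n j ≤
      B - ∑ i ∈ Finset.univ.erase j, m i := by
    intro n
    have hrest : ∑ i ∈ Finset.univ.erase j, m i ≤
        ∑ i ∈ Finset.univ.erase j, ((x n i - a i) * Real.log (x n i) - K * x n i) :=
      Finset.sum_le_sum fun i _ => by
        linarith [add_sub_exp_le_sub_mul_log_sub_mul (ha i).le (hx n i) K, hx n i]
    linarith [Finset.add_sum_erase Finset.univ
      (fun i => (x n i - a i) * Real.log (x n i) - K * x n i) (Finset.mem_univ j), hsum n]
  obtain ⟨n, hn⟩ := (((tendsto_sub_mul_log_sub_mul (ha j) K).comp hj).eventually_gt_atTop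
    (B - ∑ i ∈ Finset.univ.erase j, m i)).exists
  exact (hbdd n).not_gt hn

lemma ReactionNetwork.SingleLinkageClass.complexes_subset {N : ℕ} {rn : ReactionNetwork N}
    (hsingle : rn.SingleLinkageClass) {T : Finset (Fin N → ℝ)}
    (hT : rn.IsUnionOfLinkageClasses T) : rn.complexes ⊆ T := by
  obtain ⟨⟨z, hz⟩, hTsub, hTclosed⟩ := hT
  exact fun y hy => hTclosed z hz y hy (hsingle z (hTsub z hz) y hy)

/-- **Lemma (no dominating union of linkage classes in the single linkage class case).**
Let `(𝒞, ℛ)` be a reaction network on `N` species whose reaction diagram consists of a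
single linkage class.  Then there is no sequence of points `x_n ∈ ℝ^N_{>0}`, all in the
same stoichiometric compatibility class, for which `lim_n x_{n,i} ∈ {0, ∞}` for at least
one `i`, such that `𝒞` is partitioned along `(x_n)` with tiers `T_1, …, T_P` and constant
`C`, and the top tier `T_1` consists of a union of linkage classes. -/
theorem no_union_of_linkage_classes_single_linkage
    {N : ℕ} (rn : ReactionNetwork N) (hsingle : rn.SingleLinkageClass) :
    ¬ ∃ x : ℕ → Fin N → ℝ,
        (∀ n i, 0 < x n i) ∧
        (∀ n m : ℕ, x n - x m ∈ rn.stoichSubspace) ∧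
        (∃ i, Tendsto (fun n => x n i) atTop (nhds 0) ∨
              Tendsto (fun n => x n i) atTop atTop) ∧
        ∃ (P : ℕ) (hP : 0 < P) (T : Fin P → Finset (Fin N → ℝ)) (c : ℝ),
          PartitionedAlong rn.complexes x T c ∧
          rn.IsUnionOfLinkageClasses (T ⟨0, hP⟩) := by
  rintro ⟨x, hx, hcompat, ⟨j, hj⟩, P, hP, T, c, hpart, hunion⟩
  have htop := hsingle.complexes_subset hunion
  have hreact : ∀ g ∈ {v | ∃ r ∈ rn.reactions, v = r.2 - r.1},
      ∃ M, ∀ n, ‖logPairing (x n) g‖ ≤ M := by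
    rintro _ ⟨r, hr, rfl⟩
    exact ⟨Real.log c, hpart.abs_logPairing_sub_le hx (htop (rn.source_mem r hr))
      (htop (rn.target_mem r hr))⟩
  obtain ⟨K, hK0, hK⟩ := rn.stoichSubspace.exists_uniform_bound_of_forall_bounded
    (fun n => logPairing (x n)) fun v hv => exists_bound_of_mem_span _ hreact hv
  refine not_tendsto_of_sum_sub_mul_log_sub_mul_le (hx 0) hx
    (fun n => sum_sub_mul_log_sub_mul_le (hx n) (hx 0) hK0 (hK n _ (hcompat n 0))) j ?_
  rcases hj with hj | hj
  · exact (tendsto_nhdsWithin_iff.2 ⟨hj, .of_forall fun n => hx n j⟩).mono_right le_sup_left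
  · exact hj.mono_right le_sup_right
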